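/- For every ε with 0 < ε < 1, there exist three points a, b, c ∈ ℝ² with ‖a − b‖ = 1, ‖(a+b)/2 − c‖ = ε, and ‖a − c‖ ≤ 2 and ‖b − c‖ ≤ 2. Hence after merging a and b (a merge within a factor 2 of optimal), the minimum pairwise distance among remaining centroids can be made arbitrarily small. -/

import Mathlib

/-! Put `c` at height `ε` above the midpoint of `a` and `b`, orthogonally to `a - b`; by Pythagoras
`‖a - c‖² = ‖b - c‖² = 1/4 + ε² < 4`. -/

open scoped RealInnerProductSpace

section Midpoint

variable {E : Type*} [NormedAddCommGroup E] [InnerProductSpace ℝ E]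

theorem norm_left_sub_midpoint_add_orthogonal_sq {a b w : E} (h : ⟪a - b, w⟫ = 0) :
    ‖a - ((2 : ℝ)⁻¹ • (a + b) + w)‖ ^ 2 = (‖a - b‖ / 2) ^ 2 + ‖w‖ ^ 2 := by
  have hsplit : a - ((2 : ℝ)⁻¹ • (a + b) + w) = (2 : ℝ)⁻¹ • (a - b) - w := by
    module
  have horth : ⟪(2 : ℝ)⁻¹ • (a - b), w⟫ = 0 := by
    rw [real_inner_smul_left, h, mul_zero]
  rw [hsplit, norm_sub_sq_real, horth, norm_smul, Real.norm_of_nonneg (by norm_num)]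
  ring

theorem norm_right_sub_midpoint_add_orthogonal_sq {a b w : E} (h : ⟪a - b, w⟫ = 0) :
    ‖b - ((2 : ℝ)⁻¹ • (a + b) + w)‖ ^ 2 = (‖a - b‖ / 2) ^ 2 + ‖w‖ ^ 2 := by
  have h' : ⟪b - a, w⟫ = 0 := by rw [← neg_sub, inner_neg_left, h, neg_zero]
  rw [add_comm a b, norm_left_sub_midpoint_add_orthogonal_sq h', norm_sub_rev]

end Midpoint

theorem approx_centroid_merge_distance_arbitrarily_small :
    ∀ ε : ℝ, 0 < ε → ε < 1 →
      ∃ a b c : EuclideanSpace ℝ (Fin 2),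
        ‖a - b‖ = 1 ∧ ‖(2 : ℝ)⁻¹ • (a + b) - c‖ = ε ∧
        ‖a - c‖ ≤ 2 ∧ ‖b - c‖ ≤ 2 := by
  intro ε hε hε1
  set e₀ : EuclideanSpace ℝ (Fin 2) := EuclideanSpace.single 0 1
  set w : EuclideanSpace ℝ (Fin 2) := ε • EuclideanSpace.single 1 1
  have horth : ⟪(0 : EuclideanSpace ℝ (Fin 2)) - e₀, w⟫ = 0 := by
    simp [e₀, w, EuclideanSpace.inner_single_left]
  have hab : ‖(0 : EuclideanSpace ℝ (Fin 2)) - e₀‖ = 1 := by simp [e₀]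
  have hw : ‖w‖ = ε := by simp [w, norm_smul, hε.le]
  have hbound : (‖(0 : EuclideanSpace ℝ (Fin 2)) - e₀‖ / 2) ^ 2 + ‖w‖ ^ 2 ≤ 2 ^ 2 := by
    rw [hab, hw]; nlinarith
  refine ⟨0, e₀, (2 : ℝ)⁻¹ • (0 + e₀) + w, hab, by simpa using hw, ?_, ?_⟩
  · exact (pow_le_pow_iff_left₀ (norm_nonneg _) zero_le_two two_ne_zero).mp
      ((norm_left_sub_midpoint_add_orthogonal_sq horth).trans_le hbound)
  · exact (pow_le_pow_iff_left₀ (norm_nonneg _) zero_le_two two_ne_zero).mp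
      ((norm_right_sub_midpoint_add_orthogonal_sq horth).trans_le hbound)
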